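/- arXiv:1205.0390 — 3 statements merged into one kernel-verified Lean document; each statement's English description precedes it below -/
import Mathlib

section
/- Let (R, m) be a 1-dimensional Noetherian local ring, I an m-primary ideal, 𝓘 = {I_n} an I-admissible filtration, and J = (x) ⊆ I_1 a parameter ideal with e_0(J) = e_0(𝓘). Then J is a reduction of 𝓘, i.e., x·I_n = I_{n+1} for all sufficiently large n. -/
open IsLocalRing

/-- Length of a module, as the Krull dimension of its lattice of submodules. -/
noncomputable def modLen (R M : Type*) [CommRing R] [AddCommGroup M] [Module R M] : ℕ :=
  (WithBot.unbotD 0 (Order.krullDim (Submodule R M))).toNat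

/-- `F` is an `I`-admissible (ℤ-indexed) filtration of ideals. -/
def IsAdmissibleFiltration {R : Type*} [CommRing R] (I : Ideal R) (F : ℤ → Ideal R) : Prop :=
  (∀ n : ℤ, F (n + 1) ≤ F n) ∧ (∀ m n : ℤ, F m * F n ≤ F (m + n)) ∧
    (∀ n : ℤ, n ≤ 0 → F n = ⊤) ∧
    ∃ k : ℕ, ∀ n : ℤ, I ^ n.toNat ≤ F n ∧ F n ≤ I ^ (n - k).toNat

/-- The length of `A/B` for ideals `B ≤ A`. -/
noncomputable def idealQuotLen (R : Type*) [CommRing R] (A B : Ideal R) : ℕ :=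
  modLen R (A ⧸ Submodule.comap (Submodule.subtype (A : Submodule R R)) (B : Submodule R R))

/-!
Let `W = (0 :_R x)`. Multiplication by `x` gives an exact sequence
`0 → W → R/A → R/xA → R/(x) → 0` as soon as `A ∩ W = 0`, which holds for every `A ⊆ 𝔪^k` with
`k` large (Artin–Rees, since `W` is killed by a power of `𝔪`). Hence for such `A` of finite colength
`ℓ(R/xA) = ℓ(R/A) + c` with a constant `c`. Taking `A = (x)^n` shows `c = e₀((x))`, and taking
`A = I_n` then gives `ℓ(R/xI_n) = e₀(𝓘) n - e₁(𝓘) + e₀(𝓘) = ℓ(R/I_{n+1})` for large `n`.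
Since `xI_n ⊆ I_{n+1}`, the two ideals coincide.
-/

lemma modLen_eq_toNat_length (R M : Type*) [CommRing R] [AddCommGroup M] [Module R M] :
    modLen R M = (Module.length R M).toNat := by
  rw [modLen, ← Module.coe_length, WithBot.unbotD_coe]

namespace Submodule

variable {R M : Type*} [CommRing R] [AddCommGroup M] [Module R M]

theorem eq_of_le_of_toNat_length_quotient_eq {N P : Submodule R M} (hNP : N ≤ P)
    (hfin : Module.length R (M ⧸ N) ≠ ⊤)
    (hlen : (Module.length R (M ⧸ N)).toNat = (Module.length R (M ⧸ P)).toNat) : N = P := by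
  have hfinP : Module.length R (M ⧸ P) ≠ ⊤ :=
    ne_top_of_le_ne_top hfin (Module.length_le_of_surjective _ (factor_surjective hNP))
  replace hlen : Module.length R (M ⧸ N) = Module.length R (M ⧸ P) := by
    rw [← ENat.natCast_toNat hfin, ← ENat.natCast_toNat hfinP, hlen]
  rw [Module.length_quotient, Module.length_quotient] at hlen
  rw [Module.length_quotient] at hfin
  by_contra hne
  exact (Order.coheight_strictAnti (lt_of_le_of_ne hNP hne) (hlen ▸ hfin.lt_top)).ne' hlen

theorem span_singleton_smul_ker_lsmul (x : R) :
    Ideal.span {x} • LinearMap.ker (LinearMap.lsmul R M x) = ⊥ := by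
  rw [eq_bot_iff, smul_le]
  intro r hr w hw
  obtain ⟨y, rfl⟩ := Ideal.mem_span_singleton'.mp hr
  rw [LinearMap.mem_ker, LinearMap.lsmul_apply] at hw
  rw [mem_bot, mul_smul, hw, smul_zero]

variable (x : R) (N : Submodule R M)

def smulMapQ : M ⧸ N →ₗ[R] M ⧸ Ideal.span {x} • N :=
  N.mapQ _ (LinearMap.lsmul R M x) fun _ hn ↦ smul_mem_smul (Ideal.mem_span_singleton_self x) hn

@[simp]
theorem smulMapQ_mk (m : M) : smulMapQ x N (Quotient.mk m) = Quotient.mk (x • m) := rfl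

theorem exact_kerLsmul_smulMapQ :
    Function.Exact (N.mkQ ∘ₗ (LinearMap.ker (LinearMap.lsmul R M x)).subtype)
      (smulMapQ x N).rangeRestrict := by
  rw [LinearMap.exact_iff, LinearMap.ker_rangeRestrict]
  ext q
  induction q using Quotient.induction_on with
  | H m =>
    simp only [LinearMap.mem_ker, smulMapQ_mk, LinearMap.mem_range, LinearMap.coe_comp,
      Function.comp_apply, coe_subtype, mkQ_apply, Quotient.mk_eq_zero,
      ideal_span_singleton_smul, mem_smul_pointwise_iff_exists, Subtype.exists, Quotient.eq]
    constructor
    · rintro ⟨n, hn, hxn⟩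
      refine ⟨m - n, ?_, by simpa using N.neg_mem hn⟩
      rw [LinearMap.lsmul_apply, smul_sub, hxn, sub_self]
    · rintro ⟨w, hw, hwm⟩
      refine ⟨m - w, by simpa using N.neg_mem hwm, ?_⟩
      rw [LinearMap.lsmul_apply] at hw
      rw [smul_sub, hw, sub_zero]

theorem exact_range_smulMapQ_factor :
    Function.Exact (LinearMap.range (smulMapQ x N)).subtype
      (factor (smul_mono_right _ le_top : Ideal.span {x} • N ≤ Ideal.span {x} • ⊤)) := by
  rw [LinearMap.exact_iff, range_subtype]
  ext q
  induction q using Quotient.induction_on with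
  | H m =>
    simp only [LinearMap.mem_ker, LinearMap.mem_range, factor, mapQ_apply, LinearMap.id_apply,
      Quotient.mk_eq_zero]
    constructor
    · intro hm
      rw [ideal_span_singleton_smul, mem_smul_pointwise_iff_exists] at hm
      obtain ⟨b, -, rfl⟩ := hm
      exact ⟨_, smulMapQ_mk x N b⟩
    · rintro ⟨y, hy⟩
      induction y using Quotient.induction_on with
      | H b =>
        rw [smulMapQ_mk, Quotient.eq] at hy
        have hxb : x • b ∈ Ideal.span {x} • (⊤ : Submodule R M) :=
          smul_mem_smul (Ideal.mem_span_singleton_self x) trivial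
        have hle : Ideal.span {x} • N ≤ Ideal.span {x} • (⊤ : Submodule R M) :=
          smul_mono_right _ le_top
        simpa using sub_mem hxb (hle hy)

end Submodule

theorem Module.length_quotient_smul_add_length_ker_lsmul {R M : Type*} [CommRing R]
    [AddCommGroup M] [Module R M] (x : R) (N : Submodule R M)
    (hN : Disjoint N (LinearMap.ker (LinearMap.lsmul R M x))) :
    length R (M ⧸ Ideal.span {x} • N) + length R (LinearMap.ker (LinearMap.lsmul R M x)) =
      length R (M ⧸ Ideal.span {x} • (⊤ : Submodule R M)) + length R (M ⧸ N) := by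
  have hinj : Function.Injective (N.mkQ ∘ₗ (LinearMap.ker (LinearMap.lsmul R M x)).subtype) := by
    rw [← LinearMap.ker_eq_bot, LinearMap.ker_comp, Submodule.ker_mkQ,
      ← Submodule.disjoint_iff_comap_eq_bot]
    exact hN.symm
  rw [length_eq_add_of_exact _ _ hinj (Submodule.smulMapQ x N).surjective_rangeRestrict
      (Submodule.exact_kerLsmul_smulMapQ x N),
    length_eq_add_of_exact _ _ (Submodule.subtype_injective _) (Submodule.factor_surjective _)
      (Submodule.exact_range_smulMapQ_factor x N)]
  ac_rfl

theorem Ideal.exists_pow_smul_top_inf_eq_bot {R M : Type*} [CommRing R] [IsNoetherianRing R]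
    [AddCommGroup M] [Module R M] [Module.Finite R M] (I : Ideal R) {N : Submodule R M} {t : ℕ}
    (h : I ^ t • N = ⊥) : ∃ k, I ^ k • ⊤ ⊓ N = ⊥ := by
  obtain ⟨k, hk⟩ := I.exists_pow_inf_eq_pow_smul N
  refine ⟨k + t, ?_⟩
  rw [hk _ le_self_add, add_tsub_cancel_left, eq_bot_iff, ← h]
  exact Submodule.smul_mono le_rfl inf_le_right

theorem IsAdmissibleFiltration.exists_le_pow_and_radical_eq {R : Type*} [CommRing R]
    {I : Ideal R} {F : ℤ → Ideal R} (hF : IsAdmissibleFiltration I F) (N : ℕ) :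
    ∃ n₀ : ℕ, ∀ n : ℕ, n₀ ≤ n → F n ≤ I ^ N ∧ (F n).radical = I.radical := by
  obtain ⟨k, hk⟩ := hF.2.2.2
  refine ⟨N + k + 1, fun n hn ↦ ?_⟩
  obtain ⟨hlo, hhi⟩ := hk n
  rw [Int.toNat_natCast] at hlo
  have hNk : N + 1 ≤ ((n : ℤ) - k).toNat := by omega
  refine ⟨hhi.trans (Ideal.pow_le_pow_right (by omega)), le_antisymm ?_ ?_⟩
  · exact (Ideal.radical_mono hhi).trans_eq (Ideal.radical_pow _ (by omega))
  · exact (Ideal.radical_pow _ (by omega)).symm.le.trans (Ideal.radical_mono hlo)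

section LocalRing

variable {R : Type*} [CommRing R] [IsNoetherianRing R] [IsLocalRing R]

theorem length_quotient_ne_top_of_radical_eq_maximalIdeal {A : Ideal R}
    (h : A.radical = maximalIdeal R) : Module.length R (R ⧸ A) ≠ ⊤ := by
  have hmin : maximalIdeal R ∈ A.minimalPrimes := by
    rw [← Ideal.radical_minimalPrimes, h, Ideal.minimalPrimes_eq_subsingleton_self]
    rfl
  have := IsLocalRing.quotient_artinian_of_mem_minimalPrimes_of_isLocalRing A hmin
  rw [Module.length_ne_top_iff, isFiniteLength_iff_isNoetherian_isArtinian]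
  exact ⟨inferInstance, isArtinian_of_surjective_algebraMap (Ideal.Quotient.mk_surjective (I := A))⟩

/-- The constant is `c = ℓ(R/(x)) - ℓ(0 :_R x)`. -/
theorem exists_length_quotient_span_mul_eq_add_const {x : R}
    (hx : (Ideal.span {x}).radical = maximalIdeal R) :
    ∃ (k : ℕ) (c : ℤ), ∀ A : Ideal R, A ≤ maximalIdeal R ^ k → A.radical = maximalIdeal R →
      ((Module.length R (R ⧸ Ideal.span {x} * A)).toNat : ℤ) =
        (Module.length R (R ⧸ A)).toNat + c := by
  set W := LinearMap.ker (LinearMap.lsmul R R x)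
  obtain ⟨t, ht⟩ := (Ideal.span {x}).exists_radical_pow_le_of_fg (IsNoetherian.noetherian _)
  rw [hx] at ht
  have hW : maximalIdeal R ^ t • W = ⊥ := eq_bot_iff.2 <|
    (Submodule.smul_mono_left ht).trans (Submodule.span_singleton_smul_ker_lsmul x).le
  obtain ⟨k, hk⟩ := (maximalIdeal R).exists_pow_smul_top_inf_eq_bot hW
  have hadd (A : Ideal R) (hA : A ≤ maximalIdeal R ^ k) :
      Module.length R (R ⧸ Ideal.span {x} * A) + Module.length R W =
        Module.length R (R ⧸ Ideal.span {x}) + Module.length R (R ⧸ A) := by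
    have hdisj : Disjoint A W := by
      rw [disjoint_iff, eq_bot_iff, ← hk]
      exact inf_le_inf_right _ (by simpa using hA)
    have htop : Ideal.span {x} • (⊤ : Submodule R R) = Ideal.span {x} := Ideal.mul_top _
    have h := Module.length_quotient_smul_add_length_ker_lsmul x A hdisj
    rw [htop] at h
    exact h
  -- `W` has finite length: `hadd` holds for `A = 𝔪^(k+1)`, where the right side is finite.
  have hWfin : Module.length R W ≠ ⊤ := by
    have hmk : (maximalIdeal R ^ (k + 1)).radical = maximalIdeal R := by
      rw [Ideal.radical_pow _ k.succ_ne_zero, (maximalIdeal.isMaximal R).isPrime.radical]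
    have h := hadd _ (Ideal.pow_le_pow_right k.le_succ)
    intro htop
    rw [htop, add_top] at h
    exact WithTop.add_ne_top.2 ⟨length_quotient_ne_top_of_radical_eq_maximalIdeal hx,
      length_quotient_ne_top_of_radical_eq_maximalIdeal hmk⟩ h.symm
  refine ⟨k, (Module.length R (R ⧸ Ideal.span {x})).toNat - (Module.length R W).toNat,
    fun A hA hrad ↦ ?_⟩
  have hxA : (Ideal.span {x} * A).radical = maximalIdeal R := by
    rw [Ideal.radical_mul, hx, hrad, inf_idem]
  have := congrArg ENat.toNat (hadd A hA)
  rw [ENat.toNat_add (length_quotient_ne_top_of_radical_eq_maximalIdeal hxA) hWfin,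
    ENat.toNat_add (length_quotient_ne_top_of_radical_eq_maximalIdeal hx)
      (length_quotient_ne_top_of_radical_eq_maximalIdeal hrad)] at this
  omega

theorem exists_length_quotient_span_mul_eq_add {x : R}
    (hx : (Ideal.span {x}).radical = maximalIdeal R) {f₀ f₁ : ℤ}
    (hQ : ∃ N : ℕ, ∀ n : ℕ, N ≤ n →
      ((Module.length R (R ⧸ Ideal.span {x} ^ n)).toNat : ℤ) = f₀ * n - f₁) :
    ∃ k : ℕ, ∀ A : Ideal R, A ≤ maximalIdeal R ^ k → A.radical = maximalIdeal R →
      ((Module.length R (R ⧸ Ideal.span {x} * A)).toNat : ℤ) =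
        (Module.length R (R ⧸ A)).toNat + f₀ := by
  obtain ⟨NQ, hQ⟩ := hQ
  obtain ⟨k, c, hc⟩ := exists_length_quotient_span_mul_eq_add_const hx
  refine ⟨k, ?_⟩
  suffices c = f₀ from this ▸ hc
  set n := max NQ k + 1
  have hxn := hc (Ideal.span {x} ^ n)
    ((Ideal.pow_right_mono (hx ▸ Ideal.le_radical) n).trans (Ideal.pow_le_pow_right (by omega)))
    (by rw [Ideal.radical_pow _ (Nat.succ_ne_zero _), hx])
  rw [← pow_succ', hQ n (by omega), hQ (n + 1) (by omega)] at hxn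
  push_cast at hxn
  linarith

end LocalRing

theorem stmt2_general {R : Type*} [CommRing R] [IsNoetherianRing R] [IsLocalRing R]
    (I : Ideal R) (hI : I.radical = maximalIdeal R)
    (F : ℤ → Ideal R) (hF : IsAdmissibleFiltration I F)
    (x : R) (hx1 : Ideal.span {x} ≤ F 1)
    (hpar : (Ideal.span {x}).radical = maximalIdeal R)
    (e0 e1 : ℤ)
    (hP : ∃ N : ℕ, ∀ n : ℕ, N ≤ n → (modLen R (R ⧸ F n) : ℤ) = e0 * n - e1)
    (f0 f1 : ℤ)
    (hQ : ∃ N : ℕ, ∀ n : ℕ, N ≤ n →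
      (modLen R (R ⧸ (Ideal.span {x} ^ n : Ideal R)) : ℤ) = f0 * n - f1)
    (he : f0 = e0) :
    ∃ N : ℕ, ∀ n : ℕ, N ≤ n → Ideal.span {x} * F n = F (n + 1) := by
  simp only [modLen_eq_toNat_length] at hP hQ
  obtain ⟨NP, hP⟩ := hP
  obtain ⟨k, hk⟩ := exists_length_quotient_span_mul_eq_add hpar hQ
  obtain ⟨n₀, hn₀⟩ := hF.exists_le_pow_and_radical_eq k
  refine ⟨max NP n₀, fun n hn ↦ ?_⟩
  obtain ⟨hFk, hFrad⟩ := hn₀ n (by omega)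
  rw [hI] at hFrad
  have hle : Ideal.span {x} * F n ≤ F (n + 1) :=
    (Ideal.mul_mono_left hx1).trans ((hF.2.1 1 n).trans_eq (by rw [add_comm]))
  have hxF := hk (F n) (hFk.trans (Ideal.pow_right_mono (hI ▸ Ideal.le_radical) k)) hFrad
  have hF1 := hP (n + 1) (by omega)
  rw [hP n (by omega), he] at hxF
  push_cast at hF1
  refine Submodule.eq_of_le_of_toNat_length_quotient_eq hle
    (length_quotient_ne_top_of_radical_eq_maximalIdeal ?_) ?_
  · rw [Ideal.radical_mul, hpar, hFrad, inf_idem]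
  · have hlen : ((Module.length R (R ⧸ Ideal.span {x} * F n)).toNat : ℤ) =
        (Module.length R (R ⧸ F (n + 1))).toNat := by
      rw [hxF, hF1]
      ring
    exact_mod_cast hlen

theorem stmt2 {R : Type*} [CommRing R] [IsNoetherianRing R] [IsLocalRing R]
    (hdim : ringKrullDim R = 1)
    (I : Ideal R) (hI : I.radical = maximalIdeal R)
    (F : ℤ → Ideal R) (hF : IsAdmissibleFiltration I F)
    (x : R) (hx1 : Ideal.span {x} ≤ F 1)
    (hpar : (Ideal.span {x}).radical = maximalIdeal R)
    (e0 e1 : ℤ)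
    (hP : ∃ N : ℕ, ∀ n : ℕ, N ≤ n → (modLen R (R ⧸ F n) : ℤ) = e0 * n - e1)
    (f0 f1 : ℤ)
    (hQ : ∃ N : ℕ, ∀ n : ℕ, N ≤ n →
      (modLen R (R ⧸ (Ideal.span {x} ^ n : Ideal R)) : ℤ) = f0 * n - f1)
    (he : f0 = e0) :
    ∃ N : ℕ, ∀ n : ℕ, N ≤ n → Ideal.span {x} * F n = F (n + 1) :=
  stmt2_general I hI F hF x hx1 hpar e0 e1 hP f0 f1 hQ he
end

section
/- Let (R, m) be a 1-dimensional Cohen-Macaulay Noetherian local ring, I an m-primary ideal, 𝓘 = {I_n} an I-admissible filtration, and (x) a minimal reduction of 𝓘. Then for all n ≥ 1, length(I_{n-1}/I_n) ≤ e_0(𝓘), with equality if and only if I_n = x·I_{n-1}. -/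
open IsLocalRing

/-!
Multiplication by the regular element `x` identifies `R ⧸ A` with `xR ⧸ xA`, so every ideal `A`
of finite colength satisfies `λ(A ⧸ xA) = λ(R ⧸ xR)`. For `xA ≤ B ≤ A` this splits as
`λ(A ⧸ B) + λ(B ⧸ xA) = λ(R ⧸ xR)`, giving `λ(A ⧸ B) ≤ λ(R ⧸ xR)` with equality iff `B = xA`;
take `A = I_{n-1}`, `B = I_n`. For large `n` we have `I_{n+1} = x I_n`, so the Hilbert polynomial
gives `e₀ = λ(I_n ⧸ I_{n+1}) = λ(R ⧸ xR)`. Finally `x` is regular: `(x)` contains `I_{N+1}`, hence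
a power of `m`, so `x` is a unit or `(x)` is `m`-primary, where the Cohen–Macaulay hypothesis
applies.
-/

theorem modLen_eq_of_length_eq {R M : Type*} [CommRing R] [AddCommGroup M] [Module R M] {n : ℕ}
    (h : Module.length R M = n) : modLen R M = n := by
  rw [modLen, ← Module.coe_length, WithBot.unbotD_coe, h, ENat.toNat_natCast]

section
variable {R M N : Type*} [Ring R] [AddCommGroup M] [Module R M] [AddCommGroup N] [Module R N]

theorem Module.length_quotient_eq_add_of_le_range (f : N →ₗ[R] M) {q : Submodule R M}
    (hq : q ≤ LinearMap.range f) :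
    Module.length R (M ⧸ q) =
      Module.length R (N ⧸ q.comap f) + Module.length R (M ⧸ LinearMap.range f) := by
  refine Module.length_eq_add_of_exact (Submodule.mapQ _ q f le_rfl) (Submodule.factor hq)
    ?_ (Submodule.factor_surjective hq) ?_
  · rw [← LinearMap.ker_eq_bot, Submodule.ker_mapQ, Submodule.mkQ_map_self]
  · rw [LinearMap.exact_iff, Submodule.range_mapQ, Submodule.ker_mapQ, Submodule.comap_id]

theorem Submodule.length_quotient_eq_add {p q : Submodule R M} (hqp : q ≤ p) :
    Module.length R (M ⧸ q) =
      Module.length R (p ⧸ q.comap p.subtype) + Module.length R (M ⧸ p) := by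
  have := Module.length_quotient_eq_add_of_le_range p.subtype (q := q) (by simpa using hqp)
  rwa [Submodule.range_subtype] at this

theorem Submodule.length_quotient_comap_subtype_eq_zero_iff {p q : Submodule R M} (hqp : q ≤ p) :
    Module.length R (p ⧸ q.comap p.subtype) = 0 ↔ p = q := by
  rw [Module.length_eq_zero_iff, Submodule.Quotient.subsingleton_iff,
    Submodule.comap_subtype_eq_top]
  exact ⟨fun h => le_antisymm h hqp, fun h => h.le⟩

end

namespace Ideal
variable {R : Type*} [CommRing R] {x : R}

theorem comap_mulLeft_span_singleton_mul (hx : IsSMulRegular R x) (A : Ideal R) :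
    Submodule.comap (LinearMap.mulLeft R x) (span {x} * A) = A := by
  ext r
  simp only [Submodule.mem_comap, LinearMap.mulLeft_apply, mem_span_singleton_mul]
  exact ⟨fun ⟨z, hz, h⟩ => hx h ▸ hz, fun hr => ⟨r, hr, rfl⟩⟩

theorem length_quotient_span_singleton_mul (hx : IsSMulRegular R x) (A : Ideal R) :
    Module.length R (R ⧸ span {x} * A) =
      Module.length R (R ⧸ A) + Module.length R (R ⧸ span {x}) := by
  have hrange : LinearMap.range (LinearMap.mulLeft R x) = span {x} := by
    ext r; simp [mem_span_singleton', mul_comm, eq_comm]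
  have := Module.length_quotient_eq_add_of_le_range (LinearMap.mulLeft R x)
    (q := span {x} * A) (hrange ▸ mul_le_left)
  rwa [comap_mulLeft_span_singleton_mul hx, hrange] at this

theorem length_quotient_add_length_quotient_span_singleton_mul (hx : IsSMulRegular R x)
    {A B : Ideal R} (hA : Module.length R (R ⧸ A) ≠ ⊤) (hBA : B ≤ A) (hxAB : span {x} * A ≤ B) :
    Module.length R (A ⧸ Submodule.comap (A : Submodule R R).subtype B) +
        Module.length R (B ⧸ Submodule.comap (B : Submodule R R).subtype (span {x} * A)) =
      Module.length R (R ⧸ span {x}) := by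
  have h := length_quotient_span_singleton_mul hx A
  rw [Submodule.length_quotient_eq_add hxAB, Submodule.length_quotient_eq_add hBA] at h
  apply ENat.add_right_injective_of_ne_top hA
  dsimp only
  rw [← h]
  ring

end Ideal

theorem idealQuotLen_le_and_eq_iff {R : Type*} [CommRing R] {x : R} {A B : Ideal R} {E : ℕ}
    (hx : IsSMulRegular R x) (hA : Module.length R (R ⧸ A) ≠ ⊤)
    (hE : Module.length R (R ⧸ Ideal.span {x}) = E) (hBA : B ≤ A)
    (hxAB : Ideal.span {x} * A ≤ B) :
    idealQuotLen R A B ≤ E ∧ (idealQuotLen R A B = E ↔ B = Ideal.span {x} * A) := by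
  have h := Ideal.length_quotient_add_length_quotient_span_singleton_mul hx hA hBA hxAB
  have hfin := WithTop.add_ne_top.mp (h.trans hE ▸ ENat.natCast_ne_top E)
  obtain ⟨a, ha⟩ := ENat.ne_top_iff_exists.mp hfin.1
  obtain ⟨b, hb⟩ := ENat.ne_top_iff_exists.mp hfin.2
  rw [hE, ← ha, ← hb, ← Nat.cast_add, Nat.cast_inj] at h
  have hb0 : b = 0 ↔ B = Ideal.span {x} * A := by
    rw [← Nat.cast_eq_zero (R := ℕ∞), hb,
      Submodule.length_quotient_comap_subtype_eq_zero_iff hxAB, eq_comm]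
  rw [idealQuotLen, modLen_eq_of_length_eq ha.symm, ← hb0]
  omega

namespace IsLocalRing
variable {R : Type*} [CommRing R] [IsLocalRing R] {J : Ideal R} {k : ℕ}

theorem radical_eq_maximalIdeal_of_pow_le (hJ : J ≠ ⊤) (hk : maximalIdeal R ^ k ≤ J) :
    J.radical = maximalIdeal R :=
  le_antisymm (le_maximalIdeal (by rwa [ne_eq, Ideal.radical_eq_top]))
    fun r hr => ⟨k, hk (Ideal.pow_mem_pow hr k)⟩

theorem isUnit_or_radical_span_singleton_eq_maximalIdeal {x : R}
    (hk : maximalIdeal R ^ k ≤ Ideal.span {x}) :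
    IsUnit x ∨ (Ideal.span {x}).radical = maximalIdeal R := by
  rw [or_iff_not_imp_left, ← Ideal.span_singleton_eq_top]
  exact (radical_eq_maximalIdeal_of_pow_le · hk)

theorem length_quotient_ne_top_of_pow_le [IsNoetherianRing R] (hk : maximalIdeal R ^ k ≤ J) :
    Module.length R (R ⧸ J) ≠ ⊤ := by
  rcases eq_or_ne J ⊤ with rfl | hJ
  · rw [Module.length_eq_zero]
    exact ENat.zero_ne_top
  have : IsArtinianRing (R ⧸ J) := quotient_artinian_of_mem_minimalPrimes_of_isLocalRing J <| by
    rw [← Ideal.radical_minimalPrimes, radical_eq_maximalIdeal_of_pow_le hJ hk,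
      Ideal.minimalPrimes_eq_subsingleton_self]
    rfl
  have : IsArtinian R (R ⧸ J) :=
    isArtinian_of_surjective_algebraMap (Ideal.Quotient.mk_surjective (I := J))
  exact Module.length_ne_top

end IsLocalRing

namespace IsAdmissibleFiltration
variable {R : Type*} [CommRing R] {I : Ideal R} {F : ℤ → Ideal R}

theorem span_singleton_mul_le (hF : IsAdmissibleFiltration I F) {x : R} (hx : x ∈ F 1) (n : ℤ) :
    Ideal.span {x} * F n ≤ F (n + 1) :=
  calc Ideal.span {x} * F n ≤ F 1 * F n :=
        Ideal.mul_mono_left ((Ideal.span_singleton_le_iff_mem _).2 hx)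
    _ ≤ F (n + 1) := add_comm 1 n ▸ hF.2.1 1 n

theorem exists_pow_le [IsNoetherianRing R] (hF : IsAdmissibleFiltration I F) {J : Ideal R}
    (hJ : J ≤ I.radical) : ∃ c : ℕ, ∀ n : ℕ, J ^ (c * n) ≤ F n := by
  obtain ⟨c, hc⟩ := Ideal.exists_pow_le_of_le_radical_of_fg hJ (IsNoetherian.noetherian J)
  obtain ⟨-, -, -, _, hIF⟩ := hF
  refine ⟨c, fun n => ?_⟩
  calc J ^ (c * n) = (J ^ c) ^ n := pow_mul J c n
    _ ≤ I ^ n := Ideal.pow_right_mono hc n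
    _ ≤ F n := by simpa using (hIF n).1

end IsAdmissibleFiltration

theorem leadingCoeff_eq_length_quotient_span_singleton {R : Type*} [CommRing R] {x : R}
    {F : ℤ → Ideal R} {e0 e1 : ℤ} {E : ℕ} (hx : IsSMulRegular R x)
    (hF : ∀ n : ℕ, Module.length R (R ⧸ F n) ≠ ⊤)
    (hE : Module.length R (R ⧸ Ideal.span {x}) = E)
    (hred : ∃ N : ℕ, ∀ n : ℕ, N ≤ n → Ideal.span {x} * F n = F (n + 1))
    (hP : ∃ N : ℕ, ∀ n : ℕ, N ≤ n → (modLen R (R ⧸ F n) : ℤ) = e0 * n - e1) :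
    e0 = E := by
  obtain ⟨N, hN⟩ := hred
  obtain ⟨N', hN'⟩ := hP
  let t := max N N'
  obtain ⟨a, ha⟩ := ENat.ne_top_iff_exists.mp (hF t)
  have hsucc : Module.length R (R ⧸ F (t + 1 : ℕ)) = (a + E : ℕ) := by
    rw [Nat.cast_succ, ← hN t (le_max_left _ _), Ideal.length_quotient_span_singleton_mul hx,
      ← ha, hE, Nat.cast_add]
  have h0 := hN' t (le_max_right _ _)
  have h1 := hN' (t + 1) (by omega)
  rw [modLen_eq_of_length_eq ha.symm] at h0
  rw [modLen_eq_of_length_eq hsucc] at h1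
  push_cast at h1
  linarith

theorem stmt3_general {R : Type*} [CommRing R] [IsNoetherianRing R] [IsLocalRing R]
    (hCM : ∀ a : R, (Ideal.span {a}).radical = maximalIdeal R → IsSMulRegular R a)
    (I : Ideal R) (hI : I.radical = maximalIdeal R)
    (F : ℤ → Ideal R) (hF : IsAdmissibleFiltration I F)
    (x : R) (hx1 : x ∈ F 1)
    (hred : ∃ N : ℕ, ∀ n : ℕ, N ≤ n → Ideal.span {x} * F n = F (n + 1))
    (e0 e1 : ℤ)
    (hP : ∃ N : ℕ, ∀ n : ℕ, N ≤ n → (modLen R (R ⧸ F n) : ℤ) = e0 * n - e1) :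
    ∀ n : ℕ, 1 ≤ n →
      (idealQuotLen R (F ((n : ℤ) - 1)) (F n) : ℤ) ≤ e0 ∧
      ((idealQuotLen R (F ((n : ℤ) - 1)) (F n) : ℤ) = e0 ↔
        F n = Ideal.span {x} * F ((n : ℤ) - 1)) := by
  obtain ⟨c, hc⟩ := hF.exists_pow_le hI.ge
  have hfin (t : ℕ) := length_quotient_ne_top_of_pow_le (hc t)
  obtain ⟨N, hN⟩ := hred
  have hxR : maximalIdeal R ^ (c * (N + 1)) ≤ Ideal.span {x} := calc
    _ ≤ F (N + 1 : ℕ) := hc (N + 1)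
    _ = Ideal.span {x} * F N := by rw [hN N le_rfl, Nat.cast_succ]
    _ ≤ Ideal.span {x} := Ideal.mul_le_left
  have hreg : IsSMulRegular R x :=
    (isUnit_or_radical_span_singleton_eq_maximalIdeal hxR).elim (·.isSMulRegular R) (hCM x)
  obtain ⟨E, hE⟩ := ENat.ne_top_iff_exists.mp (length_quotient_ne_top_of_pow_le hxR)
  have he0 := leadingCoeff_eq_length_quotient_span_singleton hreg hfin hE.symm ⟨N, hN⟩ hP
  intro n hn
  obtain ⟨t, rfl⟩ := Nat.exists_eq_add_of_le' hn
  rw [Nat.cast_succ, add_sub_cancel_right, he0]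
  obtain ⟨hle, hiff⟩ := idealQuotLen_le_and_eq_iff hreg (hfin t) hE.symm
    (by simpa using hF.1 t) (hF.span_singleton_mul_le hx1 t)
  exact ⟨by exact_mod_cast hle, by exact_mod_cast hiff⟩

theorem stmt3 {R : Type*} [CommRing R] [IsNoetherianRing R] [IsLocalRing R]
    (hdim : ringKrullDim R = 1)
    (hCM : ∀ a : R, (Ideal.span {a}).radical = maximalIdeal R → IsSMulRegular R a)
    (I : Ideal R) (hI : I.radical = maximalIdeal R)
    (F : ℤ → Ideal R) (hF : IsAdmissibleFiltration I F)
    (x : R) (hx1 : x ∈ F 1)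
    (hred : ∃ N : ℕ, ∀ n : ℕ, N ≤ n → Ideal.span {x} * F n = F (n + 1))
    (e0 e1 : ℤ)
    (hP : ∃ N : ℕ, ∀ n : ℕ, N ≤ n → (modLen R (R ⧸ F n) : ℤ) = e0 * n - e1) :
    ∀ n : ℕ, 1 ≤ n →
      (idealQuotLen R (F ((n : ℤ) - 1)) (F n) : ℤ) ≤ e0 ∧
      ((idealQuotLen R (F ((n : ℤ) - 1)) (F n) : ℤ) = e0 ↔
        F n = Ideal.span {x} * F ((n : ℤ) - 1)) :=
  stmt3_general hCM I hI F hF x hx1 hred e0 e1 hP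
end

section
/- Let (R, m) be a 2-dimensional Noetherian local ring, J = (x, y) a parameter ideal, and 𝓙 = {J_n} a J-admissible filtration such that the image x* of x in J_1/J_2 is a nonzerodivisor in the associated graded ring G(𝓙). For the subcomplex K^{(n)}(𝓙): 0 → J_{n-2} --(y,x)--> J_{n-1}² --(-x,y)ᵗ--> J_n → 0 of the Koszul complex K(x, y), the first homology satisfies H_1(K^{(n)}(𝓙)) ≅ ((x : y) ∩ J_{n-1}) / (x·J_{n-2}). -/
open IsLocalRing

/-- Kernel of the map `g_n : J_{n-1}² → J_n`, `(a,b) ↦ -ax + by`, viewed inside `R × R`: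
pairs `(a, b)` with both entries in `A` and `-a*x + b*y = 0`. -/
noncomputable def koszulKer {R : Type*} [CommRing R] (x y : R) (A : Ideal R) :
    Submodule R (R × R) :=
  Submodule.prod (A : Submodule R R) (A : Submodule R R) ⊓
    LinearMap.ker (y • LinearMap.snd R R R - x • LinearMap.fst R R R)

/-- Image of the map `f_n : J_{n-2} → J_{n-1}²`, `c ↦ (cy, cx)`, viewed inside `R × R`. -/
noncomputable def koszulIm {R : Type*} [CommRing R] (x y : R) (A : Ideal R) :
    Submodule R (R × R) :=
  Submodule.map
    (LinearMap.prod (LinearMap.toSpanSingleton R R y) (LinearMap.toSpanSingleton R R x))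
    (A : Submodule R R)


/-!
The projection `(a, b) ↦ b` maps the Koszul cycles in `J_{n-1}²` onto `(x : y) ∩ J_{n-1}`: if
`b ∈ J_{n-1}` and `b y = x a`, then `x a ∈ J_n`, so `a ∈ J_n : x = J_{n-1}`. A cycle `(a, x c)` with
`c ∈ J_{n-2}` is the boundary `(c y, c x)` because `x` is a nonzerodivisor: `J_n : x = J_{n-1}`
puts every element killed by `x` into every `J_n`, and these intersect to `0` by Krull's
intersection theorem.
-/

namespace IsAdmissibleFiltration

variable {R : Type*} [CommRing R] {I : Ideal R} {F : ℤ → Ideal R}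

theorem antitone (hF : IsAdmissibleFiltration I F) : Antitone F :=
  antitone_int_of_succ_le hF.1

theorem mem_of_nonpos (hF : IsAdmissibleFiltration I F) {n : ℤ} (hn : n ≤ 0) (a : R) :
    a ∈ F n := by
  simp [hF.2.2.1 n hn]

/-- Krull's intersection theorem, transported along `F n ≤ I ^ (n - k)`. -/
theorem eq_zero_of_forall_mem [IsNoetherianRing R] [IsLocalRing R]
    (hF : IsAdmissibleFiltration I F) (hI : I ≠ ⊤) {a : R} (ha : ∀ n, a ∈ F n) : a = 0 := by
  obtain ⟨k, hk⟩ := hF.2.2.2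
  have hpow : ∀ i : ℕ, a ∈ I ^ i := fun i => by
    simpa using (hk (i + k)).2 (ha (i + k))
  simpa [Ideal.iInf_pow_eq_bot_of_isLocalRing I hI] using Submodule.mem_iInf _ |>.mpr hpow

theorem mem_of_mul_mem (hF : IsAdmissibleFiltration I F) {x : R}
    (hreg : ∀ n : ℤ, 0 ≤ n → ∀ a ∈ F n, x * a ∈ F (n + 2) → a ∈ F (n + 1))
    (n : ℤ) {a : R} (ha : x * a ∈ F (n + 1)) : a ∈ F n := by
  rcases le_or_gt n 0 with hn | hn
  · exact hF.mem_of_nonpos hn a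
  obtain ⟨m, rfl⟩ : ∃ m : ℕ, n = m + 1 := ⟨(n - 1).toNat, by omega⟩
  induction m with
  | zero => exact hreg 0 le_rfl a (hF.mem_of_nonpos le_rfl a) (by simpa using ha)
  | succ m ih =>
    have hm : a ∈ F (m + 1) := ih (hF.antitone (by omega) ha) (by omega)
    exact hreg (m + 1) (by omega) a hm (by convert ha using 2; push_cast; ring)

theorem eq_zero_of_mul_eq_zero [IsNoetherianRing R] [IsLocalRing R]
    (hF : IsAdmissibleFiltration I F) (hI : I ≠ ⊤) {x : R}
    (hreg : ∀ n : ℤ, 0 ≤ n → ∀ a ∈ F n, x * a ∈ F (n + 2) → a ∈ F (n + 1))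
    (a : R) (ha : x * a = 0) : a = 0 :=
  hF.eq_zero_of_forall_mem hI fun n => hF.mem_of_mul_mem hreg n (by simp [ha])

end IsAdmissibleFiltration

section Koszul

variable {R : Type*} [CommRing R] {x y : R}

theorem mem_koszulKer {A : Ideal R} {p : R × R} :
    p ∈ koszulKer x y A ↔ p.1 ∈ A ∧ p.2 ∈ A ∧ x * p.1 = y * p.2 := by
  simp [koszulKer, sub_eq_zero, eq_comm, and_assoc]

theorem mem_koszulIm {B : Ideal R} {p : R × R} :
    p ∈ koszulIm x y B ↔ ∃ c ∈ B, c * y = p.1 ∧ c * x = p.2 := by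
  simp [koszulIm, Prod.ext_iff]

variable (x y) in
abbrev colonInf (A : Ideal R) : Ideal R :=
  Submodule.colon (Ideal.span {x} : Submodule R R) (Ideal.span {y}) ⊓ A

theorem mem_colonInf {A : Ideal R} {b : R} :
    b ∈ colonInf x y A ↔ (∃ a, x * a = y * b) ∧ b ∈ A := by
  simp [Ideal.mem_span_singleton', mul_comm]

variable (x y) in
noncomputable def koszulKerSnd (A : Ideal R) : koszulKer x y A →ₗ[R] colonInf x y A :=
  LinearMap.codRestrict _ (LinearMap.snd R R R ∘ₗ (koszulKer x y A).subtype) fun p => by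
    obtain ⟨-, hb, hab⟩ := mem_koszulKer.mp p.2
    exact mem_colonInf.mpr ⟨⟨_, hab⟩, hb⟩

theorem koszulKerSnd_surjective {A : Ideal R} (hA : ∀ a b, b ∈ A → x * a = y * b → a ∈ A) :
    Function.Surjective (koszulKerSnd x y A) := by
  rintro ⟨b, hb⟩
  obtain ⟨⟨a, hab⟩, hbA⟩ := mem_colonInf.mp hb
  exact ⟨⟨(a, b), mem_koszulKer.mpr ⟨hA a b hbA hab, hbA, hab⟩⟩, rfl⟩

theorem koszulKerSnd_comap_eq {A B : Ideal R} (hx : ∀ d, x * d = 0 → d = 0) :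
    Submodule.comap (koszulKerSnd x y A)
        (Submodule.comap (colonInf x y A : Submodule R R).subtype
          ((Ideal.span {x} * B : Ideal R) : Submodule R R)) =
      Submodule.comap (koszulKer x y A).subtype (koszulIm x y B) := by
  ext ⟨⟨a, b⟩, hp⟩
  obtain ⟨-, -, hab⟩ := mem_koszulKer.mp hp
  change b ∈ Ideal.span {x} * B ↔ (a, b) ∈ koszulIm x y B
  rw [Ideal.mem_span_singleton_mul, mem_koszulIm]
  constructor
  · rintro ⟨c, hc, rfl⟩
    have hac : c * y = a := by
      linear_combination hx (c * y - a) (by linear_combination -hab)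
    exact ⟨c, hc, hac, mul_comm c x⟩
  · rintro ⟨c, hc, -, rfl⟩
    exact ⟨c, hc, mul_comm x c⟩

noncomputable def koszulH1Equiv {A B : Ideal R} (hx : ∀ d, x * d = 0 → d = 0)
    (hA : ∀ a b, b ∈ A → x * a = y * b → a ∈ A) :
    (koszulKer x y A ⧸ Submodule.comap (koszulKer x y A).subtype (koszulIm x y B)) ≃ₗ[R]
      (colonInf x y A ⧸ Submodule.comap (colonInf x y A : Submodule R R).subtype
        ((Ideal.span {x} * B : Ideal R) : Submodule R R)) :=
  let ψ := Submodule.mkQ _ ∘ₗ koszulKerSnd x y A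
  have hker : LinearMap.ker ψ = _ := by
    rw [LinearMap.ker_comp, Submodule.ker_mkQ, koszulKerSnd_comap_eq hx]
  (Submodule.quotEquivOfEq _ _ hker.symm).trans <|
    ψ.quotKerEquivOfSurjective <|
      (Submodule.mkQ_surjective _).comp (koszulKerSnd_surjective hA)

end Koszul

theorem stmt6_general {R : Type*} [CommRing R] [IsNoetherianRing R] [IsLocalRing R]
    (x y : R)
    (hpar : (Ideal.span {x, y}).radical = maximalIdeal R)
    (F : ℤ → Ideal R) (hF : IsAdmissibleFiltration (Ideal.span {x, y}) F)
    (hy1 : y ∈ F 1)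
    (hreg : ∀ n : ℤ, 0 ≤ n → ∀ a ∈ F n, x * a ∈ F (n + 2) → a ∈ F (n + 1))
    (n : ℤ) :
    Nonempty
      ((↥(koszulKer x y (F (n - 1))) ⧸
          Submodule.comap (koszulKer x y (F (n - 1))).subtype (koszulIm x y (F (n - 2)))) ≃ₗ[R]
        (↥(Submodule.colon (Ideal.span {x} : Submodule R R) (Ideal.span {y}) ⊓ F (n - 1)) ⧸
          Submodule.comap
            (Submodule.colon (Ideal.span {x} : Submodule R R) (Ideal.span {y}) ⊓
              F (n - 1) : Ideal R).subtype
            ((Ideal.span {x} * F (n - 2) : Ideal R) : Submodule R R))) := by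
  have hI : Ideal.span {x, y} ≠ ⊤ :=
    ne_top_of_le_ne_top (maximalIdeal.isMaximal R).ne_top (hpar ▸ Ideal.le_radical)
  refine ⟨koszulH1Equiv (hF.eq_zero_of_mul_eq_zero hI hreg) fun a b hb hab => ?_⟩
  have hyb : y * b ∈ F (1 + (n - 1)) := hF.2.1 1 (n - 1) (Ideal.mul_mem_mul hy1 hb)
  exact hF.mem_of_mul_mem hreg (n - 1) (by rw [hab]; convert hyb using 2; ring)

theorem stmt6 {R : Type*} [CommRing R] [IsNoetherianRing R] [IsLocalRing R]
    (hdim : ringKrullDim R = 2) (x y : R)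
    (hpar : (Ideal.span {x, y}).radical = maximalIdeal R)
    (F : ℤ → Ideal R) (hF : IsAdmissibleFiltration (Ideal.span {x, y}) F)
    (hx1 : x ∈ F 1) (hy1 : y ∈ F 1)
    (hreg : ∀ n : ℤ, 0 ≤ n → ∀ a ∈ F n, x * a ∈ F (n + 2) → a ∈ F (n + 1))
    (n : ℤ) :
    Nonempty
      ((↥(koszulKer x y (F (n - 1))) ⧸
          Submodule.comap (koszulKer x y (F (n - 1))).subtype (koszulIm x y (F (n - 2)))) ≃ₗ[R]
        (↥(Submodule.colon (Ideal.span {x} : Submodule R R) (Ideal.span {y}) ⊓ F (n - 1)) ⧸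
          Submodule.comap
            (Submodule.colon (Ideal.span {x} : Submodule R R) (Ideal.span {y}) ⊓
              F (n - 1) : Ideal R).subtype
            ((Ideal.span {x} * F (n - 2) : Ideal R) : Submodule R R))) :=
  stmt6_general x y hpar F hF hy1 hreg n
end
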